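/- arXiv:2603.20503 — 4 statements merged into one kernel-verified Lean document; each statement's English description precedes it below -/
import Mathlib

section
/- Let (V, 𝒢, ν) be a probability space, let g ∈ L¹(ν) with g ≤ 0 and g ∉ L∞(ν). Then the infimum over ψ ∈ L∞(ν) of ∫ max(g + ψ, −ψ) dν equals ∫ (g/2) dν, but this infimum is not attained by any ψ ∈ L∞(ν). -/
open MeasureTheory Filter

private lemma max_key_aux (a b : ℝ) : max (a + b) (-b) = a / 2 + |b + a / 2| := by
  rcases abs_cases (b + a / 2) with ⟨h1, h2⟩ | ⟨h1, h2⟩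
  · rw [h1, max_eq_left (by linarith)]; ring
  · rw [h1, max_eq_right (by linarith)]; ring

/-- Dual nonexistence in `L∞`: on a probability space, for `g ∈ L¹(ν)` with `g ≤ 0` and
`g ∉ L∞(ν)`, the infimum over essentially bounded measurable `ψ` of
`∫ max(g + ψ, −ψ) dν` equals `∫ (g/2) dν`, but it is not attained by any such `ψ`. -/
theorem inf_max_not_attained_in_Linfty {V : Type*} [MeasurableSpace V] (ν : Measure V)
    [IsProbabilityMeasure ν] (g : V → ℝ) (hg : Integrable g ν) (hgle : ∀ v, g v ≤ 0)
    (hg_unbdd : ¬ ∃ M : ℝ, ∀ᵐ v ∂ν, |g v| ≤ M) :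
    (⨅ ψ : {ψ : V → ℝ // Measurable ψ ∧ ∃ M : ℝ, ∀ᵐ v ∂ν, |ψ v| ≤ M},
        ∫ v, max (g v + ψ.1 v) (-(ψ.1 v)) ∂ν) = ∫ v, g v / 2 ∂ν ∧
      ∀ ψ : V → ℝ, Measurable ψ → (∃ M : ℝ, ∀ᵐ v ∂ν, |ψ v| ≤ M) →
        ∫ v, max (g v + ψ v) (-(ψ v)) ∂ν ≠ ∫ v, g v / 2 ∂ν := by
  classical
  set c := ∫ v, g v / 2 ∂ν with hc
  have hg2 : Integrable (fun v => g v / 2) ν := hg.div_const 2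
  -- bounded measurable functions are integrable
  have hbdd_int : ∀ (ψ : V → ℝ), Measurable ψ → (∃ M, ∀ᵐ v ∂ν, |ψ v| ≤ M) →
      Integrable ψ ν := by
    rintro ψ hm ⟨M, hM⟩
    exact Integrable.mono' (integrable_const M) hm.aestronglyMeasurable
      (hM.mono fun v h => by simpa using h)
  -- key identity for the integral
  have key : ∀ (ψ : V → ℝ), Integrable ψ ν →
      ∫ v, max (g v + ψ v) (-(ψ v)) ∂ν = c + ∫ v, |ψ v + g v / 2| ∂ν := by
    intro ψ hψ
    have h1 : Integrable (fun v => |ψ v + g v / 2|) ν := (hψ.add hg2).abs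
    calc ∫ v, max (g v + ψ v) (-(ψ v)) ∂ν
        = ∫ v, (g v / 2 + |ψ v + g v / 2|) ∂ν :=
          integral_congr_ae (Filter.Eventually.of_forall fun v => max_key_aux (g v) (ψ v))
      _ = c + ∫ v, |ψ v + g v / 2| ∂ν := integral_add hg2 h1
  -- lower bound
  have lower : ∀ (ψ : V → ℝ), Integrable ψ ν →
      c ≤ ∫ v, max (g v + ψ v) (-(ψ v)) ∂ν := by
    intro ψ hψ
    rw [key ψ hψ]
    have : 0 ≤ ∫ v, |ψ v + g v / 2| ∂ν :=
      integral_nonneg fun v => abs_nonneg _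
    linarith
  -- measurable representative of g
  set g' : V → ℝ := hg.1.mk g with hg'def
  have hg'meas : Measurable g' := hg.1.stronglyMeasurable_mk.measurable
  have hg'ae : g =ᵐ[ν] g' := hg.1.ae_eq_mk
  -- the approximating sequence
  set ψn : ℕ → V → ℝ := fun n v => -(max (g' v) (-(n : ℝ))) / 2 with hψn
  have hψnmeas : ∀ n, Measurable (ψn n) := fun n =>
    ((hg'meas.max measurable_const).neg).div_const 2
  have hψnbdd : ∀ n : ℕ, ∀ᵐ v ∂ν, |ψn n v| ≤ (n : ℝ) / 2 := by
    intro n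
    filter_upwards [hg'ae] with v hv
    have h1 : -(n : ℝ) ≤ max (g' v) (-(n : ℝ)) := le_max_right _ _
    have h2 : max (g' v) (-(n : ℝ)) ≤ (n : ℝ) :=
      max_le (by rw [← hv]; exact (hgle v).trans n.cast_nonneg) (by linarith [(n.cast_nonneg : (0:ℝ) ≤ n)])
    rw [abs_le]
    constructor <;> [skip; skip] <;> simp only [hψn] <;> nlinarith
  -- the error term
  set fn : ℕ → V → ℝ := fun n v => (max (g v) (-(n : ℝ)) - g v) / 2 with hfn
  have herr : ∀ n : ℕ, ∫ v, |ψn n v + g v / 2| ∂ν = ∫ v, fn n v ∂ν := by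
    intro n
    refine integral_congr_ae ?_
    filter_upwards [hg'ae] with v hv
    have hle : g v ≤ max (g v) (-(n : ℝ)) := le_max_left _ _
    have : ψn n v + g v / 2 = -((max (g v) (-(n : ℝ)) - g v) / 2) := by
      simp only [hψn, ← hv]; ring
    rw [this, abs_neg, abs_of_nonneg (by linarith)]
  have herrtendsto : Tendsto (fun n => ∫ v, fn n v ∂ν) atTop (nhds 0) := by
    have h0 : (0 : ℝ) = ∫ v, (0 : ℝ) ∂ν := by simp
    rw [h0]
    refine tendsto_integral_of_dominated_convergence (fun v => |g v|) ?_ hg.abs ?_ ?_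
    · intro n
      have : Integrable (fn n) ν := ((hg.sup (integrable_const _)).sub hg).div_const 2
      exact this.aestronglyMeasurable
    · intro n
      refine Filter.Eventually.of_forall fun v => ?_
      have h1 : g v ≤ max (g v) (-(n : ℝ)) := le_max_left _ _
      have h2 : max (g v) (-(n : ℝ)) ≤ 0 :=
        max_le (hgle v) (by linarith [(n.cast_nonneg : (0:ℝ) ≤ n)])
      have h3 : |g v| = -g v := abs_of_nonpos (hgle v)
      rw [Real.norm_eq_abs, abs_of_nonneg (by simp only [hfn]; linarith)]
      simp only [hfn]; linarith
    · refine Filter.Eventually.of_forall fun v => ?_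
      refine tendsto_const_nhds.congr' ?_
      filter_upwards [Filter.eventually_ge_atTop ⌈-g v⌉₊] with n hn
      have : -(n : ℝ) ≤ g v := by
        have := Nat.le_of_ceil_le hn  -- (⌈-g v⌉₊ : ℝ) relation
        have h1 : -g v ≤ (n : ℝ) := le_trans (Nat.le_ceil _) (by exact_mod_cast hn)
        linarith
      simp only [hfn, max_eq_left this, sub_self, zero_div]
  -- the infimum subtype and range bounded below
  have hnonempty : Nonempty {ψ : V → ℝ // Measurable ψ ∧ ∃ M : ℝ, ∀ᵐ v ∂ν, |ψ v| ≤ M} :=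
    ⟨⟨0, measurable_const, 0, Filter.Eventually.of_forall fun v => by simp⟩⟩
  have hbdd : BddBelow (Set.range fun ψ : {ψ : V → ℝ // Measurable ψ ∧ ∃ M : ℝ, ∀ᵐ v ∂ν, |ψ v| ≤ M} =>
      ∫ v, max (g v + ψ.1 v) (-(ψ.1 v)) ∂ν) := by
    refine ⟨c, ?_⟩
    rintro x ⟨ψ, rfl⟩
    exact lower ψ.1 (hbdd_int ψ.1 ψ.2.1 ψ.2.2)
  constructor
  · refine le_antisymm ?_ (le_ciInf fun ψ => lower ψ.1 (hbdd_int ψ.1 ψ.2.1 ψ.2.2))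
    -- iInf ≤ c via the sequence
    have hvals : Tendsto (fun n => ∫ v, max (g v + ψn n v) (-(ψn n v)) ∂ν) atTop (nhds c) := by
      have heq : ∀ n, ∫ v, max (g v + ψn n v) (-(ψn n v)) ∂ν = c + ∫ v, fn n v ∂ν := by
        intro n
        rw [key (ψn n) (hbdd_int (ψn n) (hψnmeas n) ⟨(n : ℝ) / 2, hψnbdd n⟩), herr n]
      simp only [heq]
      simpa using (tendsto_const_nhds (x := c)).add herrtendsto
    refine ge_of_tendsto hvals ?_
    refine Filter.Eventually.of_forall fun n => ?_
    exact ciInf_le hbdd ⟨ψn n, hψnmeas n, (n : ℝ) / 2, hψnbdd n⟩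
  · rintro ψ hmeas ⟨M, hM⟩ heq
    have hψint : Integrable ψ ν := hbdd_int ψ hmeas ⟨M, hM⟩
    rw [key ψ hψint] at heq
    have hzero : ∫ v, |ψ v + g v / 2| ∂ν = 0 := by linarith
    have habs : Integrable (fun v => |ψ v + g v / 2|) ν := (hψint.add hg2).abs
    have hae : (fun v => |ψ v + g v / 2|) =ᵐ[ν] 0 := by
      rw [← integral_eq_zero_iff_of_nonneg (fun v => abs_nonneg _) habs]
      exact hzero
    refine hg_unbdd ⟨2 * M, ?_⟩
    filter_upwards [hae, hM] with v h1 h2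
    have : ψ v + g v / 2 = 0 := by simpa using h1
    have hgv : g v = -2 * ψ v := by linarith
    rw [hgv, abs_mul]
    calc |(-2 : ℝ)| * |ψ v| = 2 * |ψ v| := by norm_num
      _ ≤ 2 * M := by linarith
end

section
/- Let ν be a probability measure on ℝ such that ν((t, ∞)) > 0 for every t ∈ ℝ (ν is not essentially bounded above). Then for every ψ ∈ L∞(ν), sup over measurable functions W : ℝ → [0, ∞) with ∫ W dν < ∞ of ∫ (v − ψ(v))·(W(v) − 1) dν(v) = +∞. -/
open MeasureTheory

/-- If a probability measure `ν` on `ℝ` is not essentially bounded above, then for every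
essentially bounded `ψ`, the supremum over nonnegative integrable `W` of
`∫ (v − ψ(v))·(W(v) − 1) dν` is `+∞`: the value exceeds any threshold `R`. -/
theorem dual_unbounded_of_not_essentially_bounded (ν : Measure ℝ)
    [IsProbabilityMeasure ν] (hν : ∀ t : ℝ, 0 < ν (Set.Ioi t))
    (ψ : ℝ → ℝ) (hψ : Measurable ψ) (hψb : ∃ M : ℝ, ∀ᵐ v ∂ν, |ψ v| ≤ M) :
    ∀ R : ℝ, ∃ W : ℝ → ℝ, Measurable W ∧ (∀ v, 0 ≤ W v) ∧ Integrable W ν ∧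
      Integrable (fun v => (v - ψ v) * (W v - 1)) ν ∧
      R < ∫ v, (v - ψ v) * (W v - 1) ∂ν := by
  obtain ⟨M0, hM0⟩ := hψb
  set M : ℝ := |M0| with hMdef
  have hM : ∀ᵐ v ∂ν, |ψ v| ≤ M := hM0.mono fun v hv => hv.trans (le_abs_self M0)
  have hM0' : 0 ≤ M := abs_nonneg _
  intro R
  -- find a bounded piece of Ioi (M+1) with positive measure
  have hU : Set.Ioi (M + 1) = ⋃ n : ℕ, Set.Ioc (M + 1) (M + 1 + (n + 1)) := by
    ext x
    simp only [Set.mem_Ioi, Set.mem_iUnion, Set.mem_Ioc]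
    constructor
    · intro hx
      obtain ⟨n, hn⟩ := exists_nat_ge (x - (M + 1))
      exact ⟨n, hx, by linarith [Nat.le_succ n, (Nat.cast_le (α := ℝ)).mpr (Nat.le_succ n)]⟩
    · rintro ⟨n, hn, -⟩; exact hn
  have hex : ∃ n : ℕ, 0 < ν (Set.Ioc (M + 1) (M + 1 + (n + 1))) := by
    by_contra h
    push_neg at h
    have h0 : ν (Set.Ioi (M + 1)) = 0 := by
      rw [hU]
      exact measure_iUnion_null fun n => le_antisymm (h n) (zero_le)
    exact absurd h0 (hν (M + 1)).ne'
  obtain ⟨n, hD⟩ := hex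
  set D : Set ℝ := Set.Ioc (M + 1) (M + 1 + (n + 1)) with hDdef
  have hDm : MeasurableSet D := measurableSet_Ioc
  set c : ℝ := (ν D).toReal with hcdef
  have hc : 0 < c := ENNReal.toReal_pos hD.ne' (measure_ne_top ν D)
  set r : ℝ := 1 + (|R| + 1) / c with hrdef
  have hr0 : 0 < r - 1 := by
    have : 0 < (|R| + 1) / c := div_pos (by positivity) hc
    simpa [hrdef] using this
  refine ⟨fun v => D.indicator (fun _ => r - 1) v + 1, ?_, ?_, ?_, ?_, ?_⟩
  · exact (measurable_const.indicator hDm).add measurable_const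
  · intro v
    have : (0:ℝ) ≤ D.indicator (fun _ => r - 1) v :=
      Set.indicator_nonneg (fun _ _ => hr0.le) v
    dsimp only
    linarith
  · exact ((integrable_const (r - 1)).indicator hDm).add (integrable_const 1)
  · -- integrability of the integrand
    have hbound : ∀ᵐ v ∂ν,
        ‖(v - ψ v) * (D.indicator (fun _ => r - 1) v + 1 - 1)‖
          ≤ (M + 1 + (n + 1) + M) * (r - 1) := by
      filter_upwards [hM] with v hv
      rw [norm_mul]
      by_cases hvD : v ∈ D
      · have hv1 : M + 1 < v := hvD.1
        have hv2 : v ≤ M + 1 + (n + 1) := hvD.2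
        have h1 : ‖v - ψ v‖ ≤ M + 1 + (n + 1) + M := by
          rw [Real.norm_eq_abs]
          have := abs_sub_abs_le_abs_sub v (ψ v)
          have habs : |v| ≤ M + 1 + (n + 1) := by
            rw [abs_le]; constructor <;> nlinarith [Nat.cast_nonneg (α := ℝ) n]
          calc |v - ψ v| ≤ |v| + |ψ v| := abs_sub _ _
            _ ≤ M + 1 + (n + 1) + M := by linarith
        have h2 : ‖D.indicator (fun _ => r - 1) v + 1 - 1‖ = r - 1 := by
          simp [Set.indicator_of_mem hvD, abs_of_nonneg hr0.le]
        rw [h2]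
        exact mul_le_mul_of_nonneg_right h1 hr0.le
      · simp [Set.indicator_of_notMem hvD]
        positivity
    refine Integrable.mono' (integrable_const _) ?_ hbound
    exact (((measurable_id.sub hψ).mul
      (((measurable_const.indicator hDm).add measurable_const).sub
        measurable_const))).aestronglyMeasurable
  · -- the integral is large
    have hg : Integrable (D.indicator (fun _ : ℝ => r - 1)) ν :=
      (integrable_const (r - 1)).indicator hDm
    have hf : Integrable (fun v => (v - ψ v) *
        (D.indicator (fun _ => r - 1) v + 1 - 1)) ν := by
      have hbound : ∀ᵐ v ∂ν,
          ‖(v - ψ v) * (D.indicator (fun _ => r - 1) v + 1 - 1)‖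
            ≤ (M + 1 + (n + 1) + M) * (r - 1) := by
        filter_upwards [hM] with v hv
        rw [norm_mul]
        by_cases hvD : v ∈ D
        · have hv1 : M + 1 < v := hvD.1
          have hv2 : v ≤ M + 1 + (n + 1) := hvD.2
          have h1 : ‖v - ψ v‖ ≤ M + 1 + (n + 1) + M := by
            rw [Real.norm_eq_abs]
            have habs : |v| ≤ M + 1 + (n + 1) := by
              rw [abs_le]; constructor <;> nlinarith [Nat.cast_nonneg (α := ℝ) n]
            calc |v - ψ v| ≤ |v| + |ψ v| := abs_sub _ _
              _ ≤ M + 1 + (n + 1) + M := by linarith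
          have h2 : ‖D.indicator (fun _ => r - 1) v + 1 - 1‖ = r - 1 := by
            simp [Set.indicator_of_mem hvD, abs_of_nonneg hr0.le]
          rw [h2]
          exact mul_le_mul_of_nonneg_right h1 hr0.le
        · simp [Set.indicator_of_notMem hvD]
          positivity
      refine Integrable.mono' (integrable_const _) ?_ hbound
      exact (((measurable_id.sub hψ).mul
        (((measurable_const.indicator hDm).add measurable_const).sub
          measurable_const))).aestronglyMeasurable
    have hle : (D.indicator (fun _ : ℝ => r - 1)) ≤ᵐ[ν]
        fun v => (v - ψ v) * (D.indicator (fun _ => r - 1) v + 1 - 1) := by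
      filter_upwards [hM] with v hv
      by_cases hvD : v ∈ D
      · have hv1 : M + 1 < v := hvD.1
        have hψle : ψ v ≤ M := (abs_le.mp hv).2
        have h1 : (1:ℝ) ≤ v - ψ v := by linarith
        simp only [Set.indicator_of_mem hvD]
        have : r - 1 = 1 * (r - 1) := (one_mul _).symm
        calc (r - 1 : ℝ) = 1 * (r - 1) := (one_mul _).symm
          _ ≤ (v - ψ v) * (r - 1 + 1 - 1) := by
              rw [add_sub_cancel_right]
              exact mul_le_mul_of_nonneg_right h1 hr0.le
      · simp [Set.indicator_of_notMem hvD]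
    have hInt : ∫ v, D.indicator (fun _ : ℝ => r - 1) v ∂ν = c * (r - 1) := by
      rw [integral_indicator_const _ hDm]
      simp [hcdef, smul_eq_mul, Measure.real]
    have hmono := integral_mono_ae hg hf hle
    rw [hInt] at hmono
    have hcr : c * (r - 1) = |R| + 1 := by
      rw [hrdef]; field_simp; ring
    calc R ≤ |R| := le_abs_self R
      _ < |R| + 1 := by linarith
      _ = c * (r - 1) := hcr.symm
      _ ≤ _ := hmono
end

section
/- For every ε > 0, every λ ≥ 0, and every ψ ∈ ℝ, sup over w ∈ [0,1] of (1_{w<1} − λ·w² − ψ·(w−1)) ≥ 1 − λ. Consequently, inf over λ ≥ 0 and ψ ∈ ℝ of [ λ·(1+ε) + sup_{w ∈ [0,1]} (1_{w<1} − λw² − ψ(w−1)) ] = 1, where 1_{w<1} equals 1 if w < 1 and 0 otherwise. -/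
/-- Dual-value computation of Example 3.2: for every `ε > 0`, every `λ ≥ 0` and `ψ ∈ ℝ`,
`sup_{w ∈ [0,1]} (1_{w<1} − λw² − ψ(w−1)) ≥ 1 − λ`; consequently
`inf_{λ ≥ 0, ψ} [λ(1+ε) + sup_{w ∈ [0,1]} (1_{w<1} − λw² − ψ(w−1))] = 1`. -/
theorem dual_value_example (ε : ℝ) (hε : 0 < ε) :
    (∀ lam ψ : ℝ, 0 ≤ lam →
      1 - lam ≤ sSup ((fun w : ℝ =>
        (if w < 1 then (1 : ℝ) else 0) - lam * w ^ 2 - ψ * (w - 1)) '' Set.Icc 0 1)) ∧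
    (⨅ p : {lam : ℝ // 0 ≤ lam} × ℝ,
        (p.1.1 * (1 + ε) + sSup ((fun w : ℝ =>
          (if w < 1 then (1 : ℝ) else 0) - p.1.1 * w ^ 2 - p.2 * (w - 1)) '' Set.Icc 0 1)))
      = 1 := by
  have key : ∀ lam ψ : ℝ, 0 ≤ lam →
      1 - lam ≤ sSup ((fun w : ℝ =>
        (if w < 1 then (1 : ℝ) else 0) - lam * w ^ 2 - ψ * (w - 1)) '' Set.Icc 0 1) := by
    intro lam ψ hlam
    set f : ℝ → ℝ := fun w => (if w < 1 then (1:ℝ) else 0) - lam * w ^ 2 - ψ * (w - 1)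
      with hf
    have hbdd : BddAbove (f '' Set.Icc 0 1) := by
      refine ⟨1 + |ψ|, ?_⟩
      rintro x ⟨w, ⟨hw0, hw1⟩, rfl⟩
      have h1 : (if w < 1 then (1:ℝ) else 0) ≤ 1 := by split <;> norm_num
      have h2 : 0 ≤ lam * w ^ 2 := mul_nonneg hlam (sq_nonneg w)
      have h3 : -(ψ * (w - 1)) ≤ |ψ| := by
        calc -(ψ * (w-1)) ≤ |ψ * (w-1)| := neg_le_abs _
        _ = |ψ| * |w-1| := abs_mul _ _
        _ ≤ |ψ| * 1 := by
            refine mul_le_mul_of_nonneg_left ?_ (abs_nonneg ψ)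
            rw [abs_le]; constructor <;> linarith
        _ = |ψ| := mul_one _
      simp only [hf]; linarith
    refine le_of_forall_pos_le_add ?_
    intro η hη
    set t : ℝ := min 1 (η / (|ψ| + 1)) with ht
    have hψ1 : (0:ℝ) < |ψ| + 1 := by positivity
    have ht0 : 0 < t := lt_min one_pos (div_pos hη hψ1)
    have ht1 : t ≤ 1 := min_le_left _ _
    have hw : (1 - t) ∈ Set.Icc (0:ℝ) 1 := ⟨by linarith, by linarith⟩
    have hmem : f (1 - t) ∈ f '' Set.Icc 0 1 := ⟨1 - t, hw, rfl⟩
    have hle : 1 - lam - η ≤ f (1 - t) := by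
      have hif : (if (1 - t : ℝ) < 1 then (1:ℝ) else 0) = 1 := if_pos (by linarith)
      have hsq0 : (1 - t)^2 ≤ 1 := by nlinarith
      have hsq : lam * (1 - t)^2 ≤ lam := by nlinarith
      have h2 : |ψ| * t ≤ η := by
        have htr : t ≤ η / (|ψ| + 1) := min_le_right _ _
        calc |ψ| * t ≤ (|ψ|+1) * t := by nlinarith [abs_nonneg ψ]
        _ ≤ (|ψ|+1) * (η/(|ψ|+1)) := by nlinarith
        _ = η := by field_simp
      have h1 : -(|ψ| * t) ≤ ψ * t := by nlinarith [neg_abs_le ψ]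
      have hψt : -η ≤ -(ψ * ((1 - t) - 1)) := by
        have he : ψ * ((1-t)-1) = -(ψ * t) := by ring
        rw [he, neg_neg]; linarith
      simp only [hf, hif]
      linarith
    linarith [le_csSup hbdd hmem]
  refine ⟨key, ?_⟩
  set g : {lam : ℝ // 0 ≤ lam} × ℝ → ℝ := fun p =>
      p.1.1 * (1 + ε) + sSup ((fun w : ℝ =>
        (if w < 1 then (1 : ℝ) else 0) - p.1.1 * w ^ 2 - p.2 * (w - 1)) '' Set.Icc 0 1)
    with hg
  have hlb : ∀ p, (1:ℝ) ≤ g p := by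
    intro p
    have h := key p.1.1 p.2 p.1.2
    have hl := p.1.2
    simp only [hg]
    nlinarith
  have hbb : BddBelow (Set.range g) := ⟨1, by rintro x ⟨p, rfl⟩; exact hlb p⟩
  have hval : g (⟨0, le_refl 0⟩, 0) = 1 := by
    have hset : (fun w : ℝ =>
        (if w < 1 then (1 : ℝ) else 0) - (0:ℝ) * w ^ 2 - (0:ℝ) * (w - 1)) '' Set.Icc 0 1
        = (fun w : ℝ => (if w < 1 then (1 : ℝ) else 0)) '' Set.Icc 0 1 := by
      apply Set.image_congr
      intro w _; ring
    have hsup : sSup ((fun w : ℝ => (if w < 1 then (1 : ℝ) else 0)) '' Set.Icc 0 1) = 1 := by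
      apply le_antisymm
      · apply csSup_le
        · exact ⟨(if (0:ℝ) < 1 then (1:ℝ) else 0), 0, ⟨le_refl 0, zero_le_one⟩, rfl⟩
        · rintro x ⟨w, _, rfl⟩
          dsimp only; split <;> norm_num
      · apply le_csSup
        · exact ⟨1, by rintro x ⟨w, _, rfl⟩; dsimp only; split <;> norm_num⟩
        · refine ⟨0, ⟨le_refl 0, zero_le_one⟩, ?_⟩
          norm_num
    simp only [hg, hset, hsup]
    ring
  apply le_antisymm
  · calc ⨅ p, g p ≤ g (⟨0, le_refl 0⟩, 0) := ciInf_le hbb _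
    _ = 1 := hval
  · exact le_ciInf hlb
end

section
/- Let (V, 𝒢, ν) be a probability space, b > 0, and let s, s⁺, s⁻ ∈ L¹(ν) satisfy s⁺ ≥ b and s⁻ ≤ −b ν-a.s. Define t⁺(v) = max(0, −s(v)) / (|s(v)| + |s⁺(v)|) and t⁻(v) = max(0, s(v)) / (|s(v)| + |s⁻(v)|). Then 0 ≤ t⁺ + t⁻ ≤ 1 pointwise, (1 − t⁺ − t⁻)·s + t⁺·s⁺ + t⁻·s⁻ = 0 ν-a.s., and ∫ (t⁺ + t⁻) dν ≤ (1/b)·‖s‖_{L¹(ν)}. -/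
open MeasureTheory

/-- Pointwise mixing weights (relation (†) in Theorem 3.1): for `s, s⁺, s⁻ ∈ L¹(ν)` with
`s⁺ ≥ b > 0` and `s⁻ ≤ −b` a.e., the weights
`t⁺ = max(0, −s)/(|s| + |s⁺|)` and `t⁻ = max(0, s)/(|s| + |s⁻|)` satisfy
`0 ≤ t⁺ + t⁻ ≤ 1` pointwise, restore the residual to `0` a.e., and
`∫ (t⁺ + t⁻) dν ≤ ‖s‖_{L¹(ν)} / b`. -/
theorem mixing_weights {V : Type*} [MeasurableSpace V] (ν : Measure V)
    [IsProbabilityMeasure ν] (b : ℝ) (hb : 0 < b) (s sp sm : V → ℝ)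
    (hs_meas : Measurable s) (hsp_meas : Measurable sp) (hsm_meas : Measurable sm)
    (hs_int : Integrable s ν) (hsp_int : Integrable sp ν) (hsm_int : Integrable sm ν)
    (hsp : ∀ᵐ v ∂ν, b ≤ sp v) (hsm : ∀ᵐ v ∂ν, sm v ≤ -b) :
    (∀ v, 0 ≤ max 0 (-(s v)) / (|s v| + |sp v|) ∧
          0 ≤ max 0 (s v) / (|s v| + |sm v|) ∧
          max 0 (-(s v)) / (|s v| + |sp v|) + max 0 (s v) / (|s v| + |sm v|) ≤ 1) ∧
    (∀ᵐ v ∂ν,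
        (1 - max 0 (-(s v)) / (|s v| + |sp v|) - max 0 (s v) / (|s v| + |sm v|)) * s v
          + (max 0 (-(s v)) / (|s v| + |sp v|)) * sp v
          + (max 0 (s v) / (|s v| + |sm v|)) * sm v = 0) ∧
    (∫ v, (max 0 (-(s v)) / (|s v| + |sp v|) + max 0 (s v) / (|s v| + |sm v|)) ∂ν
        ≤ (1 / b) * ∫ v, |s v| ∂ν) := by
  have hptwise : ∀ v, 0 ≤ max 0 (-(s v)) / (|s v| + |sp v|) ∧
          0 ≤ max 0 (s v) / (|s v| + |sm v|) ∧
          max 0 (-(s v)) / (|s v| + |sp v|) + max 0 (s v) / (|s v| + |sm v|) ≤ 1 := by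
    intro v
    refine ⟨by positivity, by positivity, ?_⟩
    rcases le_or_gt 0 (s v) with h | h
    · have h1 : max 0 (-(s v)) = 0 := max_eq_left (by linarith)
      rw [h1, zero_div, zero_add]
      exact div_le_one_of_le₀ (le_trans (max_le (abs_nonneg _) (le_abs_self _))
        (le_add_of_nonneg_right (abs_nonneg _))) (by positivity)
    · have h1 : max 0 (s v) = 0 := max_eq_left h.le
      rw [h1, zero_div, add_zero]
      exact div_le_one_of_le₀ (le_trans (max_le (abs_nonneg _) (neg_le_abs _))
        (le_add_of_nonneg_right (abs_nonneg _))) (by positivity)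
  refine ⟨hptwise, ?_, ?_⟩
  · filter_upwards [hsp, hsm] with v h1 h2
    rcases lt_trichotomy (s v) 0 with h | h | h
    · have habs : |s v| = -(s v) := abs_of_neg h
      have hspa : |sp v| = sp v := abs_of_nonneg (le_trans hb.le h1)
      have hm1 : max 0 (-(s v)) = -(s v) := max_eq_right (by linarith)
      have hm2 : max 0 (s v) = 0 := max_eq_left h.le
      have hd : -(s v) + sp v ≠ 0 := ne_of_gt (by linarith)
      rw [habs, hspa, hm1, hm2, zero_div]
      field_simp
      ring
    · simp [h]
    · have habs : |s v| = s v := abs_of_pos h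
      have hsma : |sm v| = -(sm v) := abs_of_neg (by linarith)
      have hm1 : max 0 (-(s v)) = 0 := max_eq_left (by linarith)
      have hm2 : max 0 (s v) = s v := max_eq_right h.le
      have hd : s v + -(sm v) ≠ 0 := ne_of_gt (by linarith)
      rw [habs, hsma, hm1, hm2, zero_div]
      field_simp
      ring
  · have hf_meas : Measurable (fun v => max 0 (-(s v)) / (|s v| + |sp v|)
        + max 0 (s v) / (|s v| + |sm v|)) :=
      ((measurable_const.max hs_meas.neg).div (hs_meas.abs.add hsp_meas.abs)).add
        ((measurable_const.max hs_meas).div (hs_meas.abs.add hsm_meas.abs))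
    have hf_int : Integrable (fun v => max 0 (-(s v)) / (|s v| + |sp v|)
        + max 0 (s v) / (|s v| + |sm v|)) ν := by
      refine (integrable_const (1 : ℝ)).mono' hf_meas.aestronglyMeasurable
        (ae_of_all _ fun v => ?_)
      rw [Real.norm_eq_abs, abs_of_nonneg (add_nonneg (hptwise v).1 (hptwise v).2.1)]
      simpa using (hptwise v).2.2
    have hle : ∀ᵐ v ∂ν, max 0 (-(s v)) / (|s v| + |sp v|)
        + max 0 (s v) / (|s v| + |sm v|) ≤ |s v| / b := by
      filter_upwards [hsp, hsm] with v h1 h2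
      rcases le_or_gt 0 (s v) with h | h
      · have hm1 : max 0 (-(s v)) = 0 := max_eq_left (by linarith)
        have hm2 : max 0 (s v) = s v := max_eq_right h
        have habs : |s v| = s v := abs_of_nonneg h
        rw [hm1, hm2, habs, zero_div, zero_add]
        have hbd : b ≤ s v + |sm v| := by
          have : b ≤ |sm v| := by rw [abs_of_neg (by linarith)]; linarith
          linarith
        gcongr
      · have hm1 : max 0 (-(s v)) = -(s v) := max_eq_right (by linarith)
        have hm2 : max 0 (s v) = 0 := max_eq_left h.le
        have habs : |s v| = -(s v) := abs_of_neg h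
        rw [hm1, hm2, habs, zero_div, add_zero]
        have hbd : b ≤ -(s v) + |sp v| := by
          have : b ≤ |sp v| := by rw [abs_of_nonneg (le_trans hb.le h1)]; linarith
          linarith
        gcongr
        linarith
    calc ∫ v, (max 0 (-(s v)) / (|s v| + |sp v|) + max 0 (s v) / (|s v| + |sm v|)) ∂ν
        ≤ ∫ v, |s v| / b ∂ν := integral_mono_ae hf_int (hs_int.abs.div_const b) hle
      _ = (1 / b) * ∫ v, |s v| ∂ν := by rw [integral_div, one_div, inv_mul_eq_div]
end
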